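/- arXiv:2201.12316 — 2 statements merged into one kernel-verified Lean document; each statement's English description precedes it below -/
import Mathlib

section
/- Let k ≥ 0 (k ≠ 1), let α be an almost-sign-preserving permutation of ℤ, and σ^k_m the simple reflection exchanging n and n+1 for all n ≡ m (mod k). Then for all a, b ∈ ℤ: if b ≢ m+1 (mod k), then min_ℓ (s_α(a,ℓ) + s_{σ^k_m}(ℓ,b)) = s_α(a,b); and if b ≡ m+1 (mod k), then this minimum equals min{ s_α(a,b−1), s_α(a,b+1) + 1 }. -/
/-- `s_α(a,b) = #{n ≥ b : α(n) < a}`. -/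
noncomputable def sPerm (α : ℤ → ℤ) (a b : ℤ) : ℕ := {n : ℤ | b ≤ n ∧ α n < a}.ncard

/-- Almost-sign-preserving. -/
def ASP (α : ℤ → ℤ) : Prop :=
  {n : ℤ | 0 ≤ n ∧ α n < 0}.Finite ∧ {n : ℤ | n < 0 ∧ 0 ≤ α n}.Finite

/-- The simple reflection `σ^k_m`, exchanging `n` and `n+1` for all `n ≡ m (mod k)`
(equality when `k = 0`), fixing all other integers. -/
def sigmak (k m : ℤ) : ℤ → ℤ := fun n =>
  if n % k = m % k then n + 1 else if n % k = (m + 1) % k then n - 1 else n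

section Aux

variable {k m : ℤ}

lemma sigmak_ge (k m n : ℤ) : n - 1 ≤ sigmak k m n := by
  unfold sigmak; split_ifs <;> omega

lemma classes_ne (hk : 0 ≤ k) (hk1 : k ≠ 1) : m % k ≠ (m + 1) % k := by
  intro h
  have hdvd : k ∣ (m + 1) - m := Int.ModEq.dvd h
  simp only [add_sub_cancel_left] at hdvd
  exact hk1 (Int.eq_one_of_dvd_one hk hdvd)

lemma mod_succ {n : ℤ} (h : n % k = m % k) : (n + 1) % k = (m + 1) % k :=
  Int.ModEq.add_right 1 h

lemma sigmak_add {n : ℤ} (h : n % k = m % k) : sigmak k m n = n + 1 := by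
  unfold sigmak; rw [if_pos h]

lemma sigmak_sub (hk : 0 ≤ k) (hk1 : k ≠ 1) {n : ℤ} (h : n % k = (m + 1) % k) :
    sigmak k m n = n - 1 := by
  unfold sigmak
  rw [if_neg, if_pos h]
  intro h'
  exact classes_ne hk hk1 (h'.symm.trans h)

lemma sigmak_id {n : ℤ} (h1 : n % k ≠ m % k) (h2 : n % k ≠ (m + 1) % k) :
    sigmak k m n = n := by
  unfold sigmak; rw [if_neg h1, if_neg h2]

lemma sfin (α : Equiv.Perm ℤ) (hα : ASP ⇑α) (a l : ℤ) :
    {n : ℤ | l ≤ n ∧ α n < a}.Finite := by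
  have h1 : {n : ℤ | l ≤ n ∧ α n < a} ⊆
      (Set.Ico l 0 ∪ {n : ℤ | 0 ≤ n ∧ α n < 0}) ∪ (⇑α ⁻¹' Set.Ico 0 a) := by
    intro n hn
    by_cases h0 : n < 0
    · exact Or.inl (Or.inl ⟨hn.1, h0⟩)
    · by_cases hαn : α n < 0
      · exact Or.inl (Or.inr ⟨by omega, hαn⟩)
      · exact Or.inr ⟨by omega, hn.2⟩
  exact (((Set.finite_Ico l 0).union hα.1).union
    ((Set.finite_Ico 0 a).preimage α.injective.injOn)).subset h1

lemma smono (α : Equiv.Perm ℤ) (hα : ASP ⇑α) {a l l' : ℤ} (h : l ≤ l') :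
    sPerm ⇑α a l' ≤ sPerm ⇑α a l :=
  Set.ncard_le_ncard (fun n hn => ⟨le_trans h hn.1, hn.2⟩) (sfin α hα a l)

lemma ncard_Ico_int (b l : ℤ) : (Set.Ico b l).ncard = (l - b).toNat := by
  rw [← Finset.coe_Ico, Set.ncard_coe_finset, Int.card_Ico]

lemma scount (α : Equiv.Perm ℤ) (hα : ASP ⇑α) {a b l : ℤ} (h : b ≤ l) :
    sPerm ⇑α a b ≤ sPerm ⇑α a l + (l - b).toNat := by
  have hsub : {n : ℤ | b ≤ n ∧ α n < a} ⊆ {n : ℤ | l ≤ n ∧ α n < a} ∪ Set.Ico b l := by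
    intro n hn
    by_cases hl : l ≤ n
    · exact Or.inl ⟨hl, hn.2⟩
    · exact Or.inr ⟨hn.1, by omega⟩
  calc sPerm ⇑α a b ≤ ({n : ℤ | l ≤ n ∧ α n < a} ∪ Set.Ico b l).ncard :=
        Set.ncard_le_ncard hsub ((sfin α hα a l).union (Set.finite_Ico b l))
    _ ≤ {n : ℤ | l ≤ n ∧ α n < a}.ncard + (Set.Ico b l).ncard := Set.ncard_union_le _ _
    _ = sPerm ⇑α a l + (l - b).toNat := by rw [ncard_Ico_int]; rfl

lemma g_lt {b l : ℤ} (h : l < b) : sPerm (sigmak k m) l b = 0 := by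
  have hset : {n : ℤ | b ≤ n ∧ sigmak k m n < l} = ∅ := by
    ext n
    simp only [Set.mem_setOf_eq, Set.mem_empty_iff_false, iff_false, not_and, not_lt]
    intro hbn
    have := sigmak_ge k m n
    omega
  rw [sPerm, hset, Set.ncard_empty]

lemma g_eq_yes (hk : 0 ≤ k) (hk1 : k ≠ 1) {b : ℤ} (h : b % k = (m + 1) % k) :
    sPerm (sigmak k m) b b = 1 := by
  have hset : {n : ℤ | b ≤ n ∧ sigmak k m n < b} = {b} := by
    ext n
    simp only [Set.mem_setOf_eq, Set.mem_singleton_iff]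
    constructor
    · rintro ⟨hbn, hσ⟩
      have := sigmak_ge k m n
      omega
    · rintro rfl
      rw [sigmak_sub hk hk1 h]
      omega
  rw [sPerm, hset, Set.ncard_singleton]

lemma g_eq_no (hk : 0 ≤ k) (hk1 : k ≠ 1) {b : ℤ} (h : b % k ≠ (m + 1) % k) :
    sPerm (sigmak k m) b b = 0 := by
  have hset : {n : ℤ | b ≤ n ∧ sigmak k m n < b} = ∅ := by
    ext n
    simp only [Set.mem_setOf_eq, Set.mem_empty_iff_false, iff_false, not_and, not_lt]
    intro hbn
    have hge := sigmak_ge k m n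
    by_contra hlt
    push_neg at hlt
    have hn : n = b := by omega
    have hσ : sigmak k m n = n - 1 := by omega
    subst hn
    by_cases h1 : n % k = m % k
    · rw [sigmak_add h1] at hσ; omega
    · by_cases h2 : n % k = (m + 1) % k
      · exact h h2
      · rw [sigmak_id h1 h2] at hσ; omega
  rw [sPerm, hset, Set.ncard_empty]

lemma g_gt (hk : 0 ≤ k) (hk1 : k ≠ 1) {b l : ℤ} (h : b < l) :
    sPerm (sigmak k m) l b = (l - b).toNat := by
  by_cases hl : l % k = (m + 1) % k
  · have hset : {n : ℤ | b ≤ n ∧ sigmak k m n < l} = insert l (Set.Ico b (l - 1)) := by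
      ext n
      simp only [Set.mem_setOf_eq, Set.mem_insert_iff, Set.mem_Ico]
      constructor
      · rintro ⟨hbn, hσ⟩
        by_cases h1 : n % k = m % k
        · rw [sigmak_add h1] at hσ
          exact Or.inr ⟨hbn, by omega⟩
        · by_cases h2 : n % k = (m + 1) % k
          · rw [sigmak_sub hk hk1 h2] at hσ
            by_cases hnl : n = l
            · exact Or.inl hnl
            · refine Or.inr ⟨hbn, ?_⟩
              by_contra hc
              push_neg at hc
              have : n = l - 1 := by omega
              subst this
              have : ((l - 1) + 1) % k = (m + 1 + 1) % k := Int.ModEq.add_right 1 h2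
              simp only [sub_add_cancel] at this
              have h3 : (m + 1) % k = (m + 1 + 1) % k := hl.symm.trans this
              have hdvd : k ∣ (m + 1 + 1) - (m + 1) := Int.ModEq.dvd h3
              simp only [add_sub_cancel_left] at hdvd
              exact hk1 (Int.eq_one_of_dvd_one hk hdvd)
          · rw [sigmak_id h1 h2] at hσ
            refine Or.inr ⟨hbn, ?_⟩
            by_contra hc
            push_neg at hc
            have : n = l - 1 := by omega
            subst this
            apply h1
            have := Int.ModEq.sub_right 1 hl
            exact (by simpa using this : l - 1 ≡ m [ZMOD k])
      · rintro (rfl | ⟨hbn, hnl⟩)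
        · rw [sigmak_sub hk hk1 hl]
          exact ⟨by omega, by omega⟩
        · refine ⟨hbn, ?_⟩
          by_cases h1 : n % k = m % k
          · rw [sigmak_add h1]; omega
          · by_cases h2 : n % k = (m + 1) % k
            · rw [sigmak_sub hk hk1 h2]; omega
            · rw [sigmak_id h1 h2]; omega
    rw [sPerm, hset, Set.ncard_insert_of_notMem (by simp only [Set.mem_Ico]; omega) (Set.finite_Ico _ _),
      ncard_Ico_int]
    omega
  · have hset : {n : ℤ | b ≤ n ∧ sigmak k m n < l} = Set.Ico b l := by
      ext n
      simp only [Set.mem_setOf_eq, Set.mem_Ico]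
      constructor
      · rintro ⟨hbn, hσ⟩
        refine ⟨hbn, ?_⟩
        by_cases h1 : n % k = m % k
        · rw [sigmak_add h1] at hσ; omega
        · by_cases h2 : n % k = (m + 1) % k
          · rw [sigmak_sub hk hk1 h2] at hσ
            by_contra hc
            push_neg at hc
            have : n = l := by omega
            subst this
            exact hl h2
          · rw [sigmak_id h1 h2] at hσ; omega
      · rintro ⟨hbn, hnl⟩
        refine ⟨hbn, ?_⟩
        by_cases h1 : n % k = m % k
        · rw [sigmak_add h1]
          by_contra hc
          push_neg at hc
          have : n = l - 1 := by omega
          subst this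
          apply hl
          have := mod_succ h1
          simpa using this
        · by_cases h2 : n % k = (m + 1) % k
          · rw [sigmak_sub hk hk1 h2]; omega
          · rw [sigmak_id h1 h2]; omega
    rw [sPerm, hset, ncard_Ico_int]

end Aux

theorem stmt_8 (k : ℤ) (hk : 0 ≤ k) (hk1 : k ≠ 1) (α : Equiv.Perm ℤ)
    (hα : ASP ⇑α) (m : ℤ) (a b : ℤ) :
    (b % k ≠ (m + 1) % k →
      IsLeast (Set.range fun l : ℤ => sPerm ⇑α a l + sPerm (sigmak k m) l b)
        (sPerm ⇑α a b)) ∧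
    (b % k = (m + 1) % k →
      IsLeast (Set.range fun l : ℤ => sPerm ⇑α a l + sPerm (sigmak k m) l b)
        (min (sPerm ⇑α a (b - 1)) (sPerm ⇑α a (b + 1) + 1))) := by
  constructor
  · intro hb
    constructor
    · refine ⟨b, ?_⟩
      show sPerm ⇑α a b + sPerm (sigmak k m) b b = sPerm ⇑α a b
      rw [g_eq_no hk hk1 hb]
      omega
    · rintro x ⟨l, rfl⟩
      simp only
      rcases le_or_gt l b with hlb | hbl
      · calc sPerm ⇑α a b ≤ sPerm ⇑α a l := smono α hα hlb
          _ ≤ _ := Nat.le_add_right _ _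
      · rw [g_gt hk hk1 hbl]
        exact scount α hα (le_of_lt hbl)
  · intro hb
    constructor
    · rcases le_total (sPerm ⇑α a (b - 1)) (sPerm ⇑α a (b + 1) + 1) with hmin | hmin
      · refine ⟨b - 1, ?_⟩
        show sPerm ⇑α a (b - 1) + sPerm (sigmak k m) (b - 1) b = _
        rw [g_lt (by omega), min_eq_left hmin]
        omega
      · refine ⟨b + 1, ?_⟩
        show sPerm ⇑α a (b + 1) + sPerm (sigmak k m) (b + 1) b = _
        rw [g_gt hk hk1 (by omega), min_eq_right hmin]
        norm_num
    · rintro x ⟨l, rfl⟩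
      simp only
      rcases lt_trichotomy l b with hlb | rfl | hbl
      · refine le_trans (min_le_left _ _) ?_
        calc sPerm ⇑α a (b - 1) ≤ sPerm ⇑α a l := smono α hα (by omega)
          _ ≤ _ := Nat.le_add_right _ _
      · refine le_trans (min_le_right _ _) ?_
        rw [g_eq_yes hk hk1 hb]
        have h2 : sPerm ⇑α a (l + 1) ≤ sPerm ⇑α a l := smono α hα (by omega)
        omega
      · refine le_trans (min_le_right _ _) ?_
        rw [g_gt hk hk1 hbl]
        have h1 : sPerm ⇑α a (b + 1) ≤ sPerm ⇑α a l + (l - (b + 1)).toNat :=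
          scount α hα (by omega)
        omega
end

section
/- Let σ_m denote the transposition of m and m+1, with s_σ(a,b) = #{n ≥ b : σ(n) < a}. For any almost-sign-preserving bijection α of ℤ: s_{α∘σ_m}(a,b) = s_α(a,b) + [b = m+1 and α(b−1) < a ≤ α(b)] − [b = m+1 and α(b) < a ≤ α(b−1)] for all a,b ∈ ℤ, where [·] denotes the indicator. -/
lemma asp_finite (α : Equiv.Perm ℤ) (hα : ASP ⇑α) (a b : ℤ) :
    {n : ℤ | b ≤ n ∧ α n < a}.Finite := by
  have h1 : {n : ℤ | b ≤ n ∧ α n < a} ⊆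
      (Set.Ico b 0 ∪ {n | 0 ≤ n ∧ α n < 0}) ∪ ((⇑α) ⁻¹' Set.Ico 0 a) := by
    intro n hn
    rcases lt_or_ge n 0 with h | h
    · exact Or.inl (Or.inl ⟨hn.1, h⟩)
    · rcases lt_or_ge (α n) 0 with h2 | h2
      · exact Or.inl (Or.inr ⟨h, h2⟩)
      · exact Or.inr ⟨h2, hn.2⟩
  exact Set.Finite.subset (((Set.finite_Ico b 0).union hα.1).union
    ((Set.finite_Ico 0 a).preimage α.injective.injOn)) h1

theorem stmt_17 (α : Equiv.Perm ℤ) (hα : ASP ⇑α) (m : ℤ) (a b : ℤ) :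
    (sPerm (⇑α ∘ ⇑(Equiv.swap m (m + 1))) a b : ℤ) =
      (sPerm ⇑α a b : ℤ) +
        (if b = m + 1 ∧ α (b - 1) < a ∧ a ≤ α b then 1 else 0) -
        (if b = m + 1 ∧ α b < a ∧ a ≤ α (b - 1) then 1 else 0) := by
  set σ := Equiv.swap m (m + 1) with hσ
  have hswap : ∀ n : ℤ, σ n = if n = m then m + 1 else if n = m + 1 then m else n := by
    intro n; rw [hσ, Equiv.swap_apply_def]
  rcases lt_trichotomy b (m + 1) with hb | hb | hb
  · -- b ≤ m : sets are in bijection via σ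
    have hb' : b ≤ m := by omega
    have hne : ¬ (b = m + 1) := by omega
    simp only [hne, false_and, if_false]
    have hset : {n : ℤ | b ≤ n ∧ (⇑α ∘ ⇑σ) n < a} = ⇑σ '' {n : ℤ | b ≤ n ∧ α n < a} := by
      ext n
      constructor
      · rintro ⟨h1, h2⟩
        refine ⟨σ n, ⟨?_, h2⟩, Equiv.swap_apply_self m (m+1) n⟩
        rw [hswap n]; split_ifs <;> omega
      · rintro ⟨x, ⟨h1, h2⟩, rfl⟩
        refine ⟨?_, by simp only [Function.comp_apply, hσ, Equiv.swap_apply_self]; exact h2⟩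
        rw [hswap x]; split_ifs <;> omega
    rw [sPerm, sPerm, hset, Set.ncard_image_of_injective _ σ.injective]
    ring
  · -- b = m + 1
    subst hb
    have hT : {n : ℤ | m + 2 ≤ n ∧ α n < a}.Finite := asp_finite α hα a (m + 2)
    have hS' : {n : ℤ | m + 1 ≤ n ∧ (⇑α ∘ ⇑σ) n < a} =
        if α m < a then insert (m + 1) {n : ℤ | m + 2 ≤ n ∧ α n < a}
        else {n : ℤ | m + 2 ≤ n ∧ α n < a} := by
      have key : ∀ n : ℤ, m + 1 ≤ n → (⇑α ∘ ⇑σ) n = if n = m + 1 then α m else α n := by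
        intro n hn
        simp only [Function.comp_apply, hswap n]
        split_ifs with h1 h2 h3 <;> first | rfl | omega
      split_ifs with h
      · ext n
        simp only [Set.mem_insert_iff, Set.mem_setOf_eq]
        constructor
        · rintro ⟨h1, h2⟩
          rw [key n h1] at h2
          by_cases hn : n = m + 1
          · exact Or.inl hn
          · exact Or.inr ⟨by omega, by simpa [hn] using h2⟩
        · rintro (rfl | ⟨h1, h2⟩)
          · exact ⟨le_refl _, by rw [key _ le_rfl]; simpa using h⟩
          · refine ⟨by omega, ?_⟩
            rw [key n (by omega)]
            simpa [show n ≠ m + 1 by omega] using h2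
      · ext n
        simp only [Set.mem_setOf_eq]
        constructor
        · rintro ⟨h1, h2⟩
          rw [key n h1] at h2
          by_cases hn : n = m + 1
          · exact absurd (by simpa [hn] using h2) h
          · exact ⟨by omega, by simpa [hn] using h2⟩
        · rintro ⟨h1, h2⟩
          refine ⟨by omega, ?_⟩
          rw [key n (by omega)]
          simpa [show n ≠ m + 1 by omega] using h2
    have hS : {n : ℤ | m + 1 ≤ n ∧ α n < a} =
        if α (m + 1) < a then insert (m + 1) {n : ℤ | m + 2 ≤ n ∧ α n < a}
        else {n : ℤ | m + 2 ≤ n ∧ α n < a} := by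
      split_ifs with h <;> ext n <;>
        simp only [Set.mem_insert_iff, Set.mem_setOf_eq] <;> constructor
      · rintro ⟨h1, h2⟩
        by_cases hn : n = m + 1
        · exact Or.inl hn
        · exact Or.inr ⟨by omega, h2⟩
      · rintro (rfl | ⟨h1, h2⟩)
        · exact ⟨le_refl _, h⟩
        · exact ⟨by omega, h2⟩
      · rintro ⟨h1, h2⟩
        by_cases hn : n = m + 1
        · exact absurd (hn ▸ h2) h
        · exact ⟨by omega, h2⟩
      · rintro ⟨h1, h2⟩
        exact ⟨by omega, h2⟩
    have hnotmem : (m + 1) ∉ {n : ℤ | m + 2 ≤ n ∧ α n < a} := by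
      simp only [Set.mem_setOf_eq]; omega
    have hins : (insert (m + 1) {n : ℤ | m + 2 ≤ n ∧ α n < a}).ncard =
        {n : ℤ | m + 2 ≤ n ∧ α n < a}.ncard + 1 :=
      Set.ncard_insert_of_notMem hnotmem hT
    rw [sPerm, sPerm, hS', hS]
    have hmm : m + 1 - 1 = m := by ring
    simp only [hmm]
    by_cases h1 : α m < a <;> by_cases h2 : α (m + 1) < a <;>
      simp only [h1, h2, if_true, if_false, hins, true_and, and_true, false_and,
        and_false] <;>
      (try split_ifs) <;> push_cast <;> omega
  · -- b ≥ m + 2 : sets are equal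
    have hne : ¬ (b = m + 1) := by omega
    simp only [hne, false_and, if_false]
    have hset : {n : ℤ | b ≤ n ∧ (⇑α ∘ ⇑σ) n < a} = {n : ℤ | b ≤ n ∧ α n < a} := by
      ext n
      simp only [Set.mem_setOf_eq, Function.comp_apply]
      constructor <;> rintro ⟨h1, h2⟩ <;> refine ⟨h1, ?_⟩ <;>
        [skip; skip] <;>
        · have : σ n = n := by rw [hswap n]; split_ifs <;> omega
          first
          | rwa [this] at h2
          | rwa [this]
    rw [sPerm, sPerm, hset]
    ring
end
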